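/- arXiv:2106.02667 — 2 statements merged into one kernel-verified Lean document; each statement's English description precedes it below -/
import Mathlib

section
/- Let p, p' : E → B be continuous maps that are homotopic to one another. Then for every natural number k, secat(p) ≤ k if and only if secat(p') ≤ k. -/
open unitInterval

/-- The inclusion of a subset, as a continuous map. -/
def setIncl {B : Type*} [TopologicalSpace B] (U : Set B) : C(U, B) :=
  ⟨Subtype.val, continuous_subtype_val⟩

/-- `secat p ≤ k`: the base admits a cover by `k + 1` open sets, each admitting a local
homotopy section of `p`. -/
def SecatLE {E B : Type*} [TopologicalSpace E] [TopologicalSpace B] (p : C(E, B)) (k : ℕ) :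
    Prop :=
  ∃ U : Fin (k + 1) → Set B,
    (∀ i, IsOpen (U i)) ∧ (⋃ i, U i) = Set.univ ∧
      ∀ i, ∃ s : C(U i, E), (p.comp s).Homotopic (setIncl (U i))

theorem SecatLE.of_homotopic {E B : Type*} [TopologicalSpace E] [TopologicalSpace B]
    {p p' : C(E, B)} (h : p.Homotopic p') {k : ℕ}
    (hp : SecatLE p k) : SecatLE p' k := by
  obtain ⟨U, hU_open, hU_cover, hsec⟩ := hp
  refine ⟨U, hU_open, hU_cover, fun i => ?_⟩
  obtain ⟨s, hs⟩ := hsec i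
  exact ⟨s, (h.symm.comp (.refl s)).trans hs⟩

/-- Homotopic maps have the same sectional category. -/
theorem secatLE_congr_homotopic {E B : Type*} [TopologicalSpace E] [TopologicalSpace B]
    (p p' : C(E, B)) (h : p.Homotopic p') (k : ℕ) :
    SecatLE p k ↔ SecatLE p' k :=
  ⟨SecatLE.of_homotopic h, SecatLE.of_homotopic h.symm⟩
end

section
/- Let p : E → B be a continuous map and let d : E → E ×_B E be the diagonal map d(e) = (e,e). Then for every natural number k, secat(Π) ≤ k if and only if secat(d) ≤ k; that is, the parametrised topological complexity TC[p : E → B] equals the sectional category of the diagonal map d : E → E ×_B E. -/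
open unitInterval

/-- The space `E^I_B` of paths in `E` lying in a single fibre of `p`
(topologised as a subspace of `C(I, E)` with the compact-open topology). -/
abbrev FibrewisePath {E B : Type*} [TopologicalSpace E] [TopologicalSpace B] (p : C(E, B)) :=
  {γ : C(I, E) // ∀ t, p (γ t) = p (γ 0)}

/-- The fibred product `E ×_B E`. -/
abbrev FibredProduct {E B : Type*} [TopologicalSpace E] [TopologicalSpace B] (p : C(E, B)) :=
  {x : E × E // p x.1 = p x.2}

/-- The parametrised endpoint map `Π : E^I_B → E ×_B E`, `γ ↦ (γ(0), γ(1))`. -/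
def piMap {E B : Type*} [TopologicalSpace E] [TopologicalSpace B] (p : C(E, B)) :
    C(FibrewisePath p, FibredProduct p) :=
  ⟨fun γ => ⟨(γ.1 0, γ.1 1), (γ.2 1).symm⟩,
    (Continuous.subtype_mk
      (((ContinuousEvalConst.continuous_eval_const 0).comp continuous_subtype_val).prodMk
        ((ContinuousEvalConst.continuous_eval_const 1).comp continuous_subtype_val)) _)⟩

/-- The parametrised topological complexity `TC[p : E → B] ≤ k`: the sectional category of the
parametrised endpoint map is at most `k`. -/
def ParamTCLE {E B : Type*} [TopologicalSpace E] [TopologicalSpace B] (p : C(E, B)) (k : ℕ) :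
    Prop :=
  SecatLE (piMap p) k

/-- The diagonal map `d : E → E ×_B E`, `e ↦ (e, e)`. -/
def diagMap {E B : Type*} [TopologicalSpace E] [TopologicalSpace B] (p : C(E, B)) :
    C(E, FibredProduct p) :=
  ⟨fun e => ⟨(e, e), rfl⟩, Continuous.subtype_mk (continuous_id.prodMk continuous_id) _⟩

/-!
If `q ∘ h ≃ p`, a local homotopy section `s` of `p` yields the local homotopy section `h ∘ s`
of `q`, so `secat q ≤ secat p`. Both inequalities follow: contracting each fibrewise path to its
start, `(t, γ) ↦ (γ 0, γ t)`, is a homotopy `d ∘ ev₀ ≃ Π`, and `d = Π ∘ c` with `c` the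
constant-path map.
-/

theorem SecatLE.of_homotopic_comp {X Y Z : Type*} [TopologicalSpace X] [TopologicalSpace Y]
    [TopologicalSpace Z] {p : C(X, Z)} {q : C(Y, Z)} {h : C(X, Y)}
    (hqp : (q.comp h).Homotopic p) {k : ℕ} (hp : SecatLE p k) : SecatLE q k := by
  obtain ⟨U, hopen, hcover, hsec⟩ := hp
  refine ⟨U, hopen, hcover, fun i => ?_⟩
  obtain ⟨s, hs⟩ := hsec i
  exact ⟨h.comp s, (hqp.comp (.refl s)).trans hs⟩

section FibrewisePath

variable {E B : Type*} [TopologicalSpace E] [TopologicalSpace B] (p : C(E, B))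

def FibrewisePath.const : C(E, FibrewisePath p) :=
  ⟨fun e => ⟨ContinuousMap.const I e, fun _ => rfl⟩,
    ContinuousMap.continuous_const'.subtype_mk _⟩

def FibrewisePath.evalZero : C(FibrewisePath p, E) :=
  ⟨fun γ => γ.1 0, (ContinuousEvalConst.continuous_eval_const 0).comp continuous_subtype_val⟩

theorem piMap_comp_const : (piMap p).comp (FibrewisePath.const p) = diagMap p := rfl

theorem diagMap_comp_evalZero_homotopic :
    ((diagMap p).comp (FibrewisePath.evalZero p)).Homotopic (piMap p) :=
  ⟨{ toFun := fun x => ⟨(x.2.1 0, x.2.1 x.1), (x.2.2 x.1).symm⟩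
     continuous_toFun := by fun_prop
     map_zero_left := fun _ => rfl
     map_one_left := fun _ => rfl }⟩

end FibrewisePath

/-- The parametrised topological complexity equals the sectional category of the diagonal
map `d : E → E ×_B E`. -/
theorem paramTCLE_iff_secatLE_diag {E B : Type*} [TopologicalSpace E] [TopologicalSpace B]
    (p : C(E, B)) (k : ℕ) :
    ParamTCLE p k ↔ SecatLE (diagMap p) k :=
  ⟨SecatLE.of_homotopic_comp (diagMap_comp_evalZero_homotopic p),
    SecatLE.of_homotopic_comp (h := FibrewisePath.const p) (by rw [piMap_comp_const])⟩
end
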